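/- Let D < 0 and let v_P = (n,p,q)ᵀ be an isotropic vector for 𝒬 (with matrix C = [[0,0,1/√D],[0,1,0],[−1/√D,0,0]]) with q ≠ 0. On the Siegel domain 𝔇 = {(z,u) ∈ ℂ² : |u|² < 2Im(z)/√|D|}, define f₀(z,u)² = Im(z) − (√|D|/2)|u|² (so f₀ > 0 on 𝔇) and f_P(z,u) = f₀(z,u)/|q·conj(z) + √D·p·conj(u) − n|. Then the supremum of f₀ over the set {X ∈ 𝔇 : f₀(X) = f_P(X)} equals 1/√|q|, and it is attained at the point z = n/q + i/|q|, u = p/q. -/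

import Mathlib

open Matrix Complex

noncomputable def sqrtD (D : ℝ) : ℂ := Complex.I * Real.sqrt |D|

noncomputable def formC (D : ℝ) : Matrix (Fin 3) (Fin 3) ℂ :=
  !![0, 0, 1 / sqrtD D; 0, 1, 0; -(1 / sqrtD D), 0, 0]

noncomputable def Qform (D : ℝ) (u v : Fin 3 → ℂ) : ℂ :=
  star u ⬝ᵥ (formC D).mulVec v

noncomputable def fzero (D : ℝ) (z u : ℂ) : ℝ :=
  Real.sqrt (z.im - (Real.sqrt |D| / 2) * Complex.normSq u)

noncomputable def fP (D : ℝ) (n p q z u : ℂ) : ℝ :=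
  fzero D z u / ‖q * (starRingEnd ℂ) z + sqrtD D * p * (starRingEnd ℂ) u - n‖

def SiegelDom (D : ℝ) : Set (ℂ × ℂ) :=
  {X | Complex.normSq X.2 < 2 * X.1.im / Real.sqrt |D|}

theorem stmt11 (D : ℝ) (hD : D < 0) (n p q : ℂ) (hq : q ≠ 0)
    (hiso : Qform D ![n, p, q] ![n, p, q] = 0) :
    IsGreatest
      {y : ℝ | ∃ X ∈ SiegelDom D, fzero D X.1 X.2 = fP D n p q X.1 X.2 ∧ y = fzero D X.1 X.2}
      (1 / Real.sqrt ‖q‖) ∧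
    (n / q + Complex.I / ((‖q‖ : ℝ) : ℂ), p / q) ∈ SiegelDom D ∧
    fzero D (n / q + Complex.I / ((‖q‖ : ℝ) : ℂ)) (p / q) =
      fP D n p q (n / q + Complex.I / ((‖q‖ : ℝ) : ℂ)) (p / q) ∧
    fzero D (n / q + Complex.I / ((‖q‖ : ℝ) : ℂ)) (p / q) =
      1 / Real.sqrt ‖q‖ := by
  set s : ℝ := Real.sqrt |D| with hs_def
  have hs : (0:ℝ) < s := Real.sqrt_pos.2 (abs_pos.2 hD.ne)
  have hq0 : (0:ℝ) < ‖q‖ := norm_pos_iff.mpr hq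
  have hqc : (starRingEnd ℂ) q ≠ 0 := by simpa using hq
  have hqa : ((‖q‖ : ℝ) : ℂ) ≠ 0 := by
    simpa using hq0.ne'
  have hsD : sqrtD D ≠ 0 := by simp [sqrtD, Complex.ext_iff, hs.ne', hD.ne]
  -- isotropy in usable complex form
  have hiso' : (starRingEnd ℂ) n * q + sqrtD D * (Complex.normSq p : ℂ)
      = (starRingEnd ℂ) q * n := by
    simp [Qform, formC, Matrix.mulVec, dotProduct, Fin.sum_univ_three,
      Matrix.vecHead, Matrix.vecTail] at hiso
    field_simp at hiso
    linear_combination hiso + sqrtD D * (Complex.normSq_eq_conj_mul_self (z := p))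
  -- real component form
  have him : s * (p.re * p.re + p.im * p.im) = 2 * (n.im * q.re - n.re * q.im) := by
    have := congrArg Complex.im hiso'
    simp [sqrtD, Complex.mul_im, Complex.mul_re, Complex.normSq_apply, ← hs_def] at this
    linarith [this]
  -- key imaginary-part identity
  have hIm : ∀ z u : ℂ,
      ((starRingEnd ℂ) q * (q * (starRingEnd ℂ) z + sqrtD D * p * (starRingEnd ℂ) u - n)).im
        = -(Complex.normSq q * (z.im - s / 2 * Complex.normSq u)
            + s / 2 * Complex.normSq (q * u - p)) := by
    intro z u
    simp only [sqrtD, Complex.mul_im, Complex.mul_re, Complex.sub_im, Complex.sub_re,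
      Complex.add_im, Complex.add_re, Complex.conj_re, Complex.conj_im, Complex.I_re,
      Complex.I_im, Complex.ofReal_re, Complex.ofReal_im, Complex.normSq_apply, ← hs_def]
    nlinarith [him]
  -- key inequality
  have habs : ∀ z u : ℂ, Complex.normSq q * (z.im - s / 2 * Complex.normSq u)
      ≤ ‖q‖ *
        ‖q * (starRingEnd ℂ) z + sqrtD D * p * (starRingEnd ℂ) u - n‖ := by
    intro z u
    set E := q * (starRingEnd ℂ) z + sqrtD D * p * (starRingEnd ℂ) u - n with hE
    have h2 : |((starRingEnd ℂ) q * E).im| ≤ ‖(starRingEnd ℂ) q * E‖ :=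
      Complex.abs_im_le_norm _
    rw [norm_mul, Complex.norm_conj] at h2
    have h3 : 0 ≤ Complex.normSq (q * u - p) := Complex.normSq_nonneg _
    have h4 : Complex.normSq q * (z.im - s / 2 * Complex.normSq u)
        ≤ -(((starRingEnd ℂ) q * E).im) := by
      rw [hIm z u]; nlinarith
    linarith [h4, h2, neg_le_abs (((starRingEnd ℂ) q * E).im)]
  -- the candidate point
  set z₀ : ℂ := n / q + Complex.I / ((‖q‖ : ℝ) : ℂ) with hz0
  set u₀ : ℂ := p / q with hu0
  have hnsq : Complex.normSq q = ‖q‖ * ‖q‖ := by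
    rw [Complex.normSq_eq_norm_sq]; ring
  have hz0im : z₀.im = (n.im * q.re - n.re * q.im) / Complex.normSq q + 1 / ‖q‖ := by
    rw [hz0]
    rw [Complex.add_im, Complex.div_im, Complex.div_im]
    simp only [Complex.normSq_ofReal, Complex.normSq_apply, Complex.I_im, Complex.I_re,
      Complex.ofReal_re, Complex.ofReal_im, one_mul, zero_mul, mul_zero, sub_zero, zero_div]
    field_simp
    ring
  have hu0n : Complex.normSq u₀ = (p.re * p.re + p.im * p.im) / Complex.normSq q := by
    rw [hu0, map_div₀]
    simp [Complex.normSq_apply]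
  have harg : z₀.im - s / 2 * Complex.normSq u₀ = 1 / ‖q‖ := by
    rw [hz0im, hu0n]
    have h5 : n.im * q.re - n.re * q.im = s * (p.re * p.re + p.im * p.im) / 2 := by
      linarith
    rw [h5]; ring
  have hdom : (z₀, u₀) ∈ SiegelDom D := by
    have h1 : (0:ℝ) < 1 / ‖q‖ := by positivity
    simp only [SiegelDom, Set.mem_setOf_eq, ← hs_def]
    rw [lt_div_iff₀ hs]
    nlinarith [harg]
  have hE0 : q * (starRingEnd ℂ) z₀ + sqrtD D * p * (starRingEnd ℂ) u₀ - n
      = -(Complex.I * q / ((‖q‖ : ℝ) : ℂ)) := by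
    rw [hz0, hu0]
    simp only [map_add, map_div₀, Complex.conj_I, Complex.conj_ofReal]
    field_simp
    linear_combination
      (((‖q‖ : ℝ) : ℂ)) * hiso'
      - (((‖q‖ : ℝ) : ℂ) * sqrtD D)
          * (Complex.normSq_eq_conj_mul_self (z := p))
  have habsE0 : ‖q * (starRingEnd ℂ) z₀ + sqrtD D * p * (starRingEnd ℂ) u₀ - n‖
      = 1 := by
    rw [hE0]
    simp [norm_div, Complex.norm_I, abs_of_pos hq0, div_self hq0.ne']
  have hf0 : fzero D z₀ u₀ = 1 / Real.sqrt ‖q‖ := by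
    simp only [fzero, ← hs_def]
    rw [harg, one_div, Real.sqrt_inv, one_div]
  have hfP0 : fzero D z₀ u₀ = fP D n p q z₀ u₀ := by
    rw [fP, habsE0, div_one]
  -- upper bound
  have hub : ∀ y ∈ {y : ℝ | ∃ X ∈ SiegelDom D,
      fzero D X.1 X.2 = fP D n p q X.1 X.2 ∧ y = fzero D X.1 X.2},
      y ≤ 1 / Real.sqrt ‖q‖ := by
    rintro y ⟨X, hX, heq, rfl⟩
    set z : ℂ := X.1
    set u : ℂ := X.2
    have ht : (0:ℝ) < z.im - s / 2 * Complex.normSq u := by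
      simp only [SiegelDom, Set.mem_setOf_eq, ← hs_def] at hX
      rw [lt_div_iff₀ hs] at hX
      nlinarith
    have hfz : fzero D z u = Real.sqrt (z.im - s / 2 * Complex.normSq u) := by
      simp only [fzero, ← hs_def]
    have hfzpos : 0 < fzero D z u := by rw [hfz]; exact Real.sqrt_pos.2 ht
    set a : ℝ := ‖q * (starRingEnd ℂ) z + sqrtD D * p * (starRingEnd ℂ) u - n‖
      with ha
    have hE1 : a = 1 := by
      rw [fP, ← ha] at heq
      have hane : a ≠ 0 := by
        intro h
        rw [h, div_zero] at heq
        exact hfzpos.ne' heq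
      rw [eq_div_iff hane] at heq
      have := mul_left_cancel₀ hfzpos.ne' (heq.trans (mul_one (fzero D z u)).symm)
      exact this
    have hle := habs z u
    rw [← ha, hE1, mul_one, hnsq] at hle
    have hle2 : z.im - s / 2 * Complex.normSq u ≤ 1 / ‖q‖ := by
      rw [le_div_iff₀ hq0]
      have h6 : ‖q‖ * ((z.im - s / 2 * Complex.normSq u) * ‖q‖)
          ≤ ‖q‖ * 1 := by
        calc ‖q‖ * ((z.im - s / 2 * Complex.normSq u) * ‖q‖)
            = ‖q‖ * ‖q‖ * (z.im - s / 2 * Complex.normSq u) := by ring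
          _ ≤ ‖q‖ := hle
          _ = ‖q‖ * 1 := (mul_one _).symm
      exact le_of_mul_le_mul_left h6 hq0
    rw [hfz, one_div, ← Real.sqrt_inv]
    exact Real.sqrt_le_sqrt (by rw [← one_div]; exact hle2)
  refine ⟨⟨⟨(z₀, u₀), hdom, hfP0, hf0.symm⟩, hub⟩, hdom, hfP0, hf0⟩
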